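/- Let w_1, ..., w_s be positive integer weights and let M_0, M_1, ..., M_r be a Hungarian sequence with r ≤ ⌈s/2⌉. Then M_r has minimum weight among all matchings of cardinality r: for every matching M' with |M'| = r, wt(M_r) ≤ wt(M'). -/
import Mathlib


/-- A matching in the line graph with edges `e_1, …, e_s`: a subset of `{1, …, s}`
containing no two consecutive integers. -/
def IsMatching (s : ℕ) (M : Finset ℕ) : Prop :=
  M ⊆ Finset.Icc 1 s ∧ ∀ i ∈ M, i + 1 ∉ M

/-- The chain `{i, i+2, …, i+2(t-1)}` with `t` elements (empty when `t = 0`). -/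
def chainSet (i t : ℕ) : Finset ℕ :=
  (Finset.range t).image (fun j => i + 2 * j)

/-- The augmentation of the chain `chainSet i t`: for `t ≥ 1` it is
`{i-1, i+1, i+3, …, i+2(t-1)+1} ∩ {1, …, s}`; for the `i`-th empty chain (`t = 0`)
it is `{i}`. -/
def augSet (s i t : ℕ) : Finset ℕ :=
  if t = 0 then {i}
  else ((Finset.range (t + 1)).image (fun j => i - 1 + 2 * j)) ∩ Finset.Icc 1 s

/-- `chainSet i t` is a maximal chain of `M` (for `t = 0`, the `i`-th empty chain). -/
def IsMaximalChain (s : ℕ) (M : Finset ℕ) (i t : ℕ) : Prop :=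
  if t = 0 then
    i ∈ Finset.Icc 1 s ∧ (i - 1) ∉ M ∧ i ∉ M ∧ (i + 1) ∉ M
  else
    chainSet i t ⊆ M ∧ (i - 2) ∉ M ∧ (i + 2 * t) ∉ M

/-- `M'` is an augmentation of the matching `M`: it is a matching of the form
`(M ∖ C) ∪ Aug(C)` for some maximal chain `C` of `M` (possibly an empty chain),
with `|M'| = |M| + 1`. -/
def IsAugmentation (s : ℕ) (M M' : Finset ℕ) : Prop :=
  IsMatching s M' ∧ M'.card = M.card + 1 ∧
    ∃ i t, IsMaximalChain s M i t ∧ M' = (M \ chainSet i t) ∪ augSet s i t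

/-- The weight of a matching: the sum of the weights of its edges. -/
def wt (w : ℕ → ℕ) (M : Finset ℕ) : ℕ := ∑ i ∈ M, w i

/-- A Hungarian sequence `M 0, M 1, …, M r`: it starts with the empty matching, and
each `M i` (for `1 ≤ i ≤ r`) is an augmentation of `M (i-1)` of minimum weight among
all augmentations of `M (i-1)`. -/
def IsHungarianSeq (s : ℕ) (w : ℕ → ℕ) (r : ℕ) (M : ℕ → Finset ℕ) : Prop :=
  M 0 = ∅ ∧ ∀ i, 1 ≤ i → i ≤ r →
    IsAugmentation s (M (i - 1)) (M i) ∧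
    ∀ M' : Finset ℕ, IsAugmentation s (M (i - 1)) M' → wt w (M i) ≤ wt w M'

lemma matching_mem_le {s : ℕ} {A : Finset ℕ} (h : IsMatching s A) {a : ℕ} (ha : a ∈ A) :
    1 ≤ a ∧ a ≤ s := Finset.mem_Icc.mp (h.1 ha)

lemma matching_shrink {s s' : ℕ} {A : Finset ℕ} (h : IsMatching s A)
    (hb : ∀ a ∈ A, a ≤ s') : IsMatching s' A :=
  ⟨fun a ha => Finset.mem_Icc.mpr ⟨(Finset.mem_Icc.mp (h.1 ha)).1, hb a ha⟩, h.2⟩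

lemma matching_erase {s : ℕ} {A : Finset ℕ} (h : IsMatching s A) (x : ℕ) :
    IsMatching s (A.erase x) :=
  ⟨(Finset.erase_subset _ _).trans h.1,
   fun i hi hi' => h.2 i (Finset.mem_of_mem_erase hi) (Finset.mem_of_mem_erase hi')⟩

lemma notmem_of_erase {A : Finset ℕ} {x y : ℕ} (h : x ∉ A.erase y) (hne : x ≠ y) : x ∉ A :=
  fun hx => h (Finset.mem_erase.mpr ⟨hne, hx⟩)

lemma pred_notMem {s x : ℕ} {B : Finset ℕ} (hB : IsMatching s B) (hx : x ∈ B) (h1 : 1 ≤ x) :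
    x - 1 ∉ B := fun h => hB.2 (x - 1) h (by rwa [Nat.sub_add_cancel h1])

lemma key_lemma : ∀ s : ℕ, ∀ A B : Finset ℕ, IsMatching s A → IsMatching s B →
    A.card + 1 ≤ B.card →
    ∃ i t, 1 ≤ i ∧ (∀ j, j < t → i + 2*j ∈ A) ∧
      ((t = 0 ∧ i ∈ B ∧ i ∉ A ∧ i - 1 ∉ A ∧ i + 1 ∉ A) ∨
       (1 ≤ t ∧ 2 ≤ i ∧ (∀ j, j ≤ t → i - 1 + 2*j ∈ B) ∧ i - 2 ∉ A ∧ i + 2*t ∉ A)) := by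
  intro s
  induction s using Nat.strong_induction_on with
  | _ s ih =>
    intro A B hA hB hc
    rcases Nat.eq_zero_or_pos s with rfl | hs
    · exfalso
      have hBe : B = ∅ := by
        have : (Finset.Icc 1 0 : Finset ℕ) = ∅ := by decide
        exact Finset.subset_empty.mp (this ▸ hB.1)
      rw [hBe] at hc; simp at hc
    by_cases hBs : s ∈ B
    · have hBpred : s - 1 ∉ B := pred_notMem hB hBs hs
      by_cases hAs : s ∈ A
      · -- s ∈ A, s ∈ B : drop s from both, recurse at s-1
        have bA : ∀ a ∈ A.erase s, a ≤ s - 1 := fun a ha => by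
          have := (matching_mem_le hA (Finset.mem_of_mem_erase ha)).2
          have := (Finset.mem_erase.mp ha).1; omega
        have bB : ∀ b ∈ B.erase s, b ≤ s - 1 := fun b hb => by
          have := (matching_mem_le hB (Finset.mem_of_mem_erase hb)).2
          have := (Finset.mem_erase.mp hb).1; omega
        obtain ⟨i, t, hi1, hchain, hrest⟩ :=
          ih (s - 1) (by omega) (A.erase s) (B.erase s)
            (matching_shrink (matching_erase hA s) bA)
            (matching_shrink (matching_erase hB s) bB)
            (by rw [Finset.card_erase_of_mem hAs, Finset.card_erase_of_mem hBs]
                have := Finset.card_pos.mpr ⟨s, hAs⟩; omega)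
        refine ⟨i, t, hi1, fun j hj => Finset.mem_of_mem_erase (hchain j hj), ?_⟩
        rcases hrest with ⟨ht0, hiB, hiA, him, hip⟩ | ⟨ht1, hi2, haug, hm2, hp2⟩
        · have hiB' := Finset.mem_erase.mp hiB
          have hile : i ≤ s := (matching_mem_le hB hiB'.2).2
          have hne1 : i ≠ s - 1 := fun h => hBpred (h ▸ hiB'.2)
          refine Or.inl ⟨ht0, hiB'.2, notmem_of_erase hiA hiB'.1,
            notmem_of_erase him (by omega), notmem_of_erase hip (by omega)⟩
        · have h0 := Finset.mem_erase.mp (haug 0 (by omega))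
          have ht := Finset.mem_erase.mp (haug t le_rfl)
          have hb0 : i - 1 + 2*t ≤ s := (matching_mem_le hB ht.2).2
          have hne1 : i - 1 + 2*t ≠ s - 1 := fun h => hBpred (h ▸ ht.2)
          have hne0 : i - 1 + 2*t ≠ s := ht.1
          refine Or.inr ⟨ht1, hi2, fun j hj => Finset.mem_of_mem_erase (haug j hj),
            notmem_of_erase hm2 (by omega), notmem_of_erase hp2 (by omega)⟩
      · -- s ∈ B, s ∉ A
        by_cases hA1 : s - 1 ∈ A
        · -- recurse at s - 2 with A.erase (s-1), B.erase s
          have hs2 : 2 ≤ s := by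
            have := (matching_mem_le hA hA1).1; omega
          have bA : ∀ a ∈ A.erase (s-1), a ≤ s - 2 := fun a ha => by
            have h1 := (matching_mem_le hA (Finset.mem_of_mem_erase ha)).2
            have h2 := (Finset.mem_erase.mp ha).1
            have h3 : a ≠ s := fun h => hAs (h ▸ Finset.mem_of_mem_erase ha)
            omega
          have bB : ∀ b ∈ B.erase s, b ≤ s - 2 := fun b hb => by
            have h1 := (matching_mem_le hB (Finset.mem_of_mem_erase hb)).2
            have h2 := (Finset.mem_erase.mp hb).1
            have h3 : b ≠ s - 1 := fun h => hBpred (h ▸ Finset.mem_of_mem_erase hb)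
            omega
          obtain ⟨i, t, hi1, hchain, hrest⟩ :=
            ih (s - 2) (by omega) (A.erase (s-1)) (B.erase s)
              (matching_shrink (matching_erase hA (s-1)) bA)
              (matching_shrink (matching_erase hB s) bB)
              (by rw [Finset.card_erase_of_mem hA1, Finset.card_erase_of_mem hBs]
                  have := Finset.card_pos.mpr ⟨s-1, hA1⟩; omega)
          have hchain' : ∀ j, j < t → i + 2*j ∈ A :=
            fun j hj => Finset.mem_of_mem_erase (hchain j hj)
          rcases hrest with ⟨ht0, hiB, hiA, him, hip⟩ | ⟨ht1, hi2, haug, hm2, hp2⟩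
          · have hiB' := Finset.mem_erase.mp hiB
            have hib : i ≤ s - 2 := bB i hiB
            by_cases hcol : i + 1 = s - 1
            · -- extend to chain {s-1}, aug {s-2, s}
              refine ⟨s - 1, 1, by omega, ?_, Or.inr ⟨le_rfl, by omega, ?_, ?_, ?_⟩⟩
              · intro j hj
                have : j = 0 := by omega
                subst this
                have : s - 1 + 2*0 = s - 1 := by omega
                rw [this]; exact hA1
              · intro j hj
                interval_cases j
                · have : s - 1 - 1 + 2*0 = i := by omega
                  rw [this]; exact hiB'.2
                · have : s - 1 - 1 + 2*1 = s := by omega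
                  rw [this]; exact hBs
              · have : s - 1 - 2 = i - 1 := by omega
                rw [this]; exact notmem_of_erase him (by omega)
              · intro h; have := (matching_mem_le hA h).2; omega
            · refine ⟨i, 0, hi1, fun j hj => by omega, Or.inl ⟨rfl, hiB'.2,
                notmem_of_erase hiA (by omega), notmem_of_erase him (by omega),
                notmem_of_erase hip (by omega)⟩⟩
          · have ht := Finset.mem_erase.mp (haug t le_rfl)
            have hbt : i - 1 + 2*t ≤ s - 2 := bB _ (haug t le_rfl)
            by_cases hcol : i + 2*t = s - 1
            · -- extend chain by one
              refine ⟨i, t + 1, hi1, ?_, Or.inr ⟨by omega, hi2, ?_, ?_, ?_⟩⟩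
              · intro j hj
                rcases Nat.lt_or_ge j t with h | h
                · exact hchain' j h
                · have : j = t := by omega
                  subst this; rw [hcol]; exact hA1
              · intro j hj
                rcases Nat.lt_or_ge j (t+1) with h | h
                · exact Finset.mem_of_mem_erase (haug j (by omega))
                · have : j = t + 1 := by omega
                  subst this
                  have : i - 1 + 2*(t+1) = s := by omega
                  rw [this]; exact hBs
              · exact notmem_of_erase hm2 (by omega)
              · intro h; have := (matching_mem_le hA h).2; omega
            · refine ⟨i, t, hi1, hchain', Or.inr ⟨ht1, hi2,
                fun j hj => Finset.mem_of_mem_erase (haug j hj),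
                notmem_of_erase hm2 (by omega), notmem_of_erase hp2 (by omega)⟩⟩
        · exact ⟨s, 0, hs, fun j hj => by omega, Or.inl ⟨rfl, hBs, hAs, hA1,
            fun h => by have := (matching_mem_le hA h).2; omega⟩⟩
    · -- s ∉ B
      by_cases hAs : s ∈ A
      · -- s ∈ A \ B : drop s from A
        have hApred : s - 1 ∉ A := pred_notMem hA hAs hs
        have bA : ∀ a ∈ A.erase s, a ≤ s - 2 := fun a ha => by
          have h1 := (matching_mem_le hA (Finset.mem_of_mem_erase ha)).2
          have h2 := (Finset.mem_erase.mp ha).1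
          have h3 : a ≠ s - 1 := fun h => hApred (h ▸ Finset.mem_of_mem_erase ha)
          have h4 := (matching_mem_le hA (Finset.mem_of_mem_erase ha)).1
          omega
        by_cases hB1 : s - 1 ∈ B
        · have bB : ∀ b ∈ B.erase (s-1), b ≤ s - 2 := fun b hb => by
            have h1 := (matching_mem_le hB (Finset.mem_of_mem_erase hb)).2
            have h2 := (Finset.mem_erase.mp hb).1
            have h3 : b ≠ s := fun h => hBs (h ▸ Finset.mem_of_mem_erase hb)
            have h4 := (matching_mem_le hB (Finset.mem_of_mem_erase hb)).1
            omega
          obtain ⟨i, t, hi1, hchain, hrest⟩ :=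
            ih (s - 2) (by omega) (A.erase s) (B.erase (s-1))
              (matching_shrink (matching_erase hA s) bA)
              (matching_shrink (matching_erase hB (s-1)) bB)
              (by rw [Finset.card_erase_of_mem hAs, Finset.card_erase_of_mem hB1]
                  have := Finset.card_pos.mpr ⟨s, hAs⟩; omega)
          refine ⟨i, t, hi1, fun j hj => Finset.mem_of_mem_erase (hchain j hj), ?_⟩
          rcases hrest with ⟨ht0, hiB, hiA, him, hip⟩ | ⟨ht1, hi2, haug, hm2, hp2⟩
          · have hib : i ≤ s - 2 := bB i hiB
            exact Or.inl ⟨ht0, Finset.mem_of_mem_erase hiB,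
              notmem_of_erase hiA (by omega), notmem_of_erase him (by omega),
              notmem_of_erase hip (by omega)⟩
          · have hbt : i - 1 + 2*t ≤ s - 2 := bB _ (haug t le_rfl)
            exact Or.inr ⟨ht1, hi2, fun j hj => Finset.mem_of_mem_erase (haug j hj),
              notmem_of_erase hm2 (by omega), notmem_of_erase hp2 (by omega)⟩
        · have bB : ∀ b ∈ B, b ≤ s - 2 := fun b hb => by
            have h1 := (matching_mem_le hB hb).2
            have h3 : b ≠ s := fun h => hBs (h ▸ hb)
            have h4 : b ≠ s - 1 := fun h => hB1 (h ▸ hb)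
            have h5 := (matching_mem_le hB hb).1
            omega
          obtain ⟨i, t, hi1, hchain, hrest⟩ :=
            ih (s - 2) (by omega) (A.erase s) B
              (matching_shrink (matching_erase hA s) bA)
              (matching_shrink hB bB)
              (by rw [Finset.card_erase_of_mem hAs]
                  have := Finset.card_pos.mpr ⟨s, hAs⟩; omega)
          refine ⟨i, t, hi1, fun j hj => Finset.mem_of_mem_erase (hchain j hj), ?_⟩
          rcases hrest with ⟨ht0, hiB, hiA, him, hip⟩ | ⟨ht1, hi2, haug, hm2, hp2⟩
          · have hib : i ≤ s - 2 := bB i hiB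
            exact Or.inl ⟨ht0, hiB, notmem_of_erase hiA (by omega),
              notmem_of_erase him (by omega), notmem_of_erase hip (by omega)⟩
          · have hbt : i - 1 + 2*t ≤ s - 2 := bB _ (haug t le_rfl)
            exact Or.inr ⟨ht1, hi2, haug,
              notmem_of_erase hm2 (by omega), notmem_of_erase hp2 (by omega)⟩
      · -- s ∉ A, s ∉ B : recurse at s - 1
        have bA : ∀ a ∈ A, a ≤ s - 1 := fun a ha => by
          have := (matching_mem_le hA ha).2
          have : a ≠ s := fun h => hAs (h ▸ ha)
          have := (matching_mem_le hA ha).2; omega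
        have bB : ∀ b ∈ B, b ≤ s - 1 := fun b hb => by
          have := (matching_mem_le hB hb).2
          have : b ≠ s := fun h => hBs (h ▸ hb)
          have := (matching_mem_le hB hb).2; omega
        exact ih (s - 1) (by omega) A B (matching_shrink hA bA) (matching_shrink hB bB) hc


lemma mem_chainSet {i t x : ℕ} : x ∈ chainSet i t ↔ ∃ j, j < t ∧ i + 2*j = x := by
  simp [chainSet]

lemma chainSet_card (i t : ℕ) : (chainSet i t).card = t := by
  rw [chainSet, Finset.card_image_of_injective _ (fun a b h => by omega), Finset.card_range]

lemma augSet_eq {s i t : ℕ} (ht : t ≠ 0)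
    (h : ∀ j, j ≤ t → i - 1 + 2*j ∈ Finset.Icc 1 s) :
    augSet s i t = (Finset.range (t+1)).image (fun j => i - 1 + 2*j) := by
  rw [augSet, if_neg ht]
  apply Finset.inter_eq_left.mpr
  intro x hx
  obtain ⟨j, hj, rfl⟩ := Finset.mem_image.mp hx
  exact h j (by simpa [Nat.lt_succ_iff] using hj)

lemma wt_sdiff_union {w : ℕ → ℕ} {X C D : Finset ℕ} (hC : C ⊆ X)
    (hD : ∀ x ∈ D, x ∉ X) : wt w ((X \ C) ∪ D) + wt w C = wt w X + wt w D := by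
  have hdisj : Disjoint (X \ C) D := by
    rw [Finset.disjoint_right]
    exact fun a ha => fun h => hD a ha (Finset.mem_sdiff.mp h).1
  rw [wt, wt, wt, wt, Finset.sum_union hdisj]
  have := Finset.sum_sdiff (f := w) hC
  omega

lemma step_lemma (s : ℕ) (w : ℕ → ℕ) (A B : Finset ℕ) (hA : IsMatching s A)
    (hB : IsMatching s B) (hc : B.card = A.card + 1)
    (hkey : ∃ i t, 1 ≤ i ∧ (∀ j, j < t → i + 2*j ∈ A) ∧
      ((t = 0 ∧ i ∈ B ∧ i ∉ A ∧ i - 1 ∉ A ∧ i + 1 ∉ A) ∨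
       (1 ≤ t ∧ 2 ≤ i ∧ (∀ j, j ≤ t → i - 1 + 2*j ∈ B) ∧ i - 2 ∉ A ∧ i + 2*t ∉ A))) :
    ∃ M'' B'', IsAugmentation s A M'' ∧ IsMatching s B'' ∧ B''.card = A.card ∧
      wt w M'' + wt w B'' = wt w A + wt w B := by
  obtain ⟨i, t, hi1, hchain, hrest⟩ := hkey
  rcases hrest with ⟨ht0, hiB, hiA, him, hip⟩ | ⟨ht1, hi2, haug, hm2, hp2⟩
  · -- t = 0 : empty chain, aug = {i}
    subst ht0
    have hC : chainSet i 0 = ∅ := by simp [chainSet]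
    have hAug : augSet s i 0 = {i} := by simp [augSet]
    refine ⟨(A \ chainSet i 0) ∪ augSet s i 0, B.erase i, ⟨?_, ?_, i, 0, ?_, rfl⟩, ?_, ?_, ?_⟩
    · -- matching
      rw [hC, hAug]
      constructor
      · intro x hx
        rcases Finset.mem_union.mp hx with h | h
        · exact hA.1 (Finset.mem_sdiff.mp h).1
        · rw [Finset.mem_singleton.mp h]; exact hB.1 hiB
      · intro x hx hx1
        rcases Finset.mem_union.mp hx with h | h <;>
          rcases Finset.mem_union.mp hx1 with h' | h'
        · exact hA.2 x (Finset.mem_sdiff.mp h).1 (Finset.mem_sdiff.mp h').1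
        · have : x = i - 1 := by have := Finset.mem_singleton.mp h'; omega
          exact him (this ▸ (Finset.mem_sdiff.mp h).1)
        · have : x = i := Finset.mem_singleton.mp h
          exact hip (this ▸ (Finset.mem_sdiff.mp h').1)
        · have := Finset.mem_singleton.mp h
          have := Finset.mem_singleton.mp h'
          omega
    · rw [hC, hAug, Finset.sdiff_empty, Finset.card_union_of_disjoint (by
          simp [Finset.disjoint_singleton_right, hiA]), Finset.card_singleton]
    · rw [IsMaximalChain, if_pos rfl]
      exact ⟨hB.1 hiB, him, hiA, hip⟩
    · exact ⟨(Finset.erase_subset _ _).trans hB.1,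
        fun x hx hx' => hB.2 x (Finset.mem_of_mem_erase hx) (Finset.mem_of_mem_erase hx')⟩
    · rw [Finset.card_erase_of_mem hiB]; omega
    · rw [hC, hAug, Finset.sdiff_empty]
      have h1 : wt w (A ∪ {i}) = wt w A + w i := by
        rw [wt, wt, Finset.sum_union (by simp [Finset.disjoint_singleton_right, hiA])]
        simp
      have h2 : wt w (B.erase i) + w i = wt w B := Finset.sum_erase_add _ _ hiB
      omega
  · -- t ≥ 1
    have htne : t ≠ 0 := by omega
    have hIcc : ∀ j, j ≤ t → i - 1 + 2*j ∈ Finset.Icc 1 s := fun j hj => hB.1 (haug j hj)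
    have hAugEq := augSet_eq htne hIcc
    have mem_aug : ∀ x, x ∈ augSet s i t ↔ ∃ j, j ≤ t ∧ i - 1 + 2*j = x := by
      intro x; rw [hAugEq]; simp [Nat.lt_succ_iff]
    have hAug_card : (augSet s i t).card = t + 1 := by
      rw [hAugEq, Finset.card_image_of_injective _ (fun a b h => by omega),
        Finset.card_range]
    have hCsub : chainSet i t ⊆ A := fun x hx => by
      obtain ⟨j, hj, rfl⟩ := mem_chainSet.mp hx; exact hchain j hj
    have hAugA : ∀ x ∈ augSet s i t, x ∉ A := by
      intro x hx hxA
      obtain ⟨j, hj, rfl⟩ := (mem_aug _).mp hx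
      rcases Nat.lt_or_ge j t with h | h
      · refine hA.2 _ hxA ?_
        have he : i - 1 + 2*j + 1 = i + 2*j := by omega
        rw [he]; exact hchain j h
      · have hjt : j = t := by omega
        have ha := hchain (t-1) (by omega)
        have he : i + 2*(t-1) + 1 = i - 1 + 2*j := by omega
        exact hA.2 _ ha (he ▸ hxA)
    have hCB : ∀ x ∈ chainSet i t, x ∉ B := by
      intro x hx hxB
      obtain ⟨j, hj, rfl⟩ := mem_chainSet.mp hx
      have hb := haug (j+1) (by omega)
      have he : i + 2*j + 1 = i - 1 + 2*(j+1) := by omega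
      exact hB.2 _ hxB (he ▸ hb)
    have hAugB : augSet s i t ⊆ B := fun x hx => by
      obtain ⟨j, hj, rfl⟩ := (mem_aug _).mp hx; exact haug j hj
    have htA : t ≤ A.card := by
      have := Finset.card_le_card hCsub; rwa [chainSet_card] at this
    have htB : t + 1 ≤ B.card := by
      have := Finset.card_le_card hAugB; rwa [hAug_card] at this
    refine ⟨(A \ chainSet i t) ∪ augSet s i t, (B \ augSet s i t) ∪ chainSet i t,
      ⟨⟨?_, ?_⟩, ?_, i, t, ?_, rfl⟩, ⟨?_, ?_⟩, ?_, ?_⟩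
    · intro x hx
      rcases Finset.mem_union.mp hx with h | h
      · exact hA.1 (Finset.mem_sdiff.mp h).1
      · exact hB.1 (hAugB h)
    · intro x hx hx1
      rcases Finset.mem_union.mp hx with h | h <;>
        rcases Finset.mem_union.mp hx1 with h' | h'
      · exact hA.2 x (Finset.mem_sdiff.mp h).1 (Finset.mem_sdiff.mp h').1
      · obtain ⟨j, hj, hje⟩ := (mem_aug _).mp h'
        obtain ⟨hxA, hxC⟩ := Finset.mem_sdiff.mp h
        rcases Nat.eq_zero_or_pos j with rfl | hjp
        · refine hm2 ?_
          have he : x = i - 2 := by omega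
          rwa [he] at hxA
        · exact hxC (mem_chainSet.mpr ⟨j-1, by omega, by omega⟩)
      · obtain ⟨j, hj, hje⟩ := (mem_aug _).mp h
        obtain ⟨hxA, hxC⟩ := Finset.mem_sdiff.mp h'
        rcases Nat.lt_or_ge j t with hlt | hge
        · exact hxC (mem_chainSet.mpr ⟨j, hlt, by omega⟩)
        · refine hp2 ?_
          have he : x + 1 = i + 2*t := by omega
          rwa [he] at hxA
      · obtain ⟨j, hj, hje⟩ := (mem_aug _).mp h
        obtain ⟨j', hj', hje'⟩ := (mem_aug _).mp h'
        omega
    · rw [Finset.card_union_of_disjoint (by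
          rw [Finset.disjoint_right]
          exact fun a ha h => hAugA a ha (Finset.mem_sdiff.mp h).1),
        Finset.card_sdiff_of_subset hCsub, chainSet_card, hAug_card]
      omega
    · rw [IsMaximalChain, if_neg htne]
      exact ⟨hCsub, hm2, hp2⟩
    · intro x hx
      rcases Finset.mem_union.mp hx with h | h
      · exact hB.1 (Finset.mem_sdiff.mp h).1
      · exact hA.1 (hCsub h)
    · intro x hx hx1
      rcases Finset.mem_union.mp hx with h | h <;>
        rcases Finset.mem_union.mp hx1 with h' | h'
      · exact hB.2 x (Finset.mem_sdiff.mp h).1 (Finset.mem_sdiff.mp h').1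
      · obtain ⟨j, hj, hje⟩ := mem_chainSet.mp h'
        exact (Finset.mem_sdiff.mp h).2 ((mem_aug _).mpr ⟨j, by omega, by omega⟩)
      · obtain ⟨j, hj, hje⟩ := mem_chainSet.mp h
        exact (Finset.mem_sdiff.mp h').2 ((mem_aug _).mpr ⟨j+1, by omega, by omega⟩)
      · obtain ⟨j, hj, hje⟩ := mem_chainSet.mp h
        obtain ⟨j', hj', hje'⟩ := mem_chainSet.mp h'
        omega
    · rw [Finset.card_union_of_disjoint (by
          rw [Finset.disjoint_right]
          exact fun a ha h => hCB a ha (Finset.mem_sdiff.mp h).1),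
        Finset.card_sdiff_of_subset hAugB, chainSet_card, hAug_card]
      omega
    · have e1 := wt_sdiff_union (w := w) hCsub hAugA
      have e2 := wt_sdiff_union (w := w) hAugB hCB
      omega


/-- For positive weights `w_1, …, w_s` and a Hungarian sequence `M_0, …, M_r` with
`r ≤ ⌈s/2⌉`, the matching `M_r` has minimum weight among all matchings of
cardinality `r`. -/
theorem stmt_7 (s : ℕ) (w : ℕ → ℕ) (hw : ∀ i, 1 ≤ i → i ≤ s → 0 < w i)
    (r : ℕ) (hr : r ≤ (s + 1) / 2) (M : ℕ → Finset ℕ)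
    (hH : IsHungarianSeq s w r M)
    (M' : Finset ℕ) (hM' : IsMatching s M') (hcard : M'.card = r) :
    wt w (M r) ≤ wt w M' := by
  obtain ⟨hM0, hstep⟩ := hH
  have hmatch : ∀ k, k ≤ r → IsMatching s (M k) := by
    intro k hk
    cases k with
    | zero =>
      rw [hM0]
      exact ⟨Finset.empty_subset _, fun i hi => absurd hi (Finset.notMem_empty i)⟩
    | succ n =>
      have := (hstep (n+1) (by omega) hk).1
      simpa using this.1
  have hcards : ∀ k, k ≤ r → (M k).card = k := by
    intro k
    induction k with
    | zero => intro _; rw [hM0]; simp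
    | succ n ihn =>
      intro hk
      have h := (hstep (n+1) (by omega) hk).1
      have h2 : (M (n+1)).card = (M n).card + 1 := by simpa using h.2.1
      rw [h2, ihn (by omega)]
  have main : ∀ k, k ≤ r → ∀ N : Finset ℕ, IsMatching s N → N.card = k →
      wt w (M k) ≤ wt w N := by
    intro k
    induction k with
    | zero => intro _ N _ _; rw [hM0]; simp [wt]
    | succ n ihn =>
      intro hk N hN hNc
      obtain ⟨M'', B'', hMaug, hB''m, hB''c, hwt⟩ :=
        step_lemma s w (M n) N (hmatch n (by omega)) hN
          (by rw [hNc, hcards n (by omega)])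
          (key_lemma s (M n) N (hmatch n (by omega)) hN
            (by rw [hNc, hcards n (by omega)]))
      have h1 : wt w (M (n+1)) ≤ wt w M'' := by
        have := (hstep (n+1) (by omega) hk).2 M'' (by simpa using hMaug)
        exact this
      have h2 : wt w (M n) ≤ wt w B'' := by
        refine ihn (by omega) B'' hB''m ?_
        rw [hB''c, hcards n (by omega)]
      omega
  exact main r le_rfl M' hM' hcard
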